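/- arXiv:0912.3358 — 2 statements merged into one kernel-verified Lean document; each statement's English description precedes it below -/
import Mathlib

section
/- If the dual space E* of a Banach space E has non-trivial type (i.e. type p for some p > 1), then E has finite cotype (i.e. cotype q for some q < ∞). -/
open MeasureTheory Finset Set
open scoped ENNReal NNReal

noncomputable section

namespace RMF

open scoped Classical

universe u

/-- The average `2^{-N} ∑_{ε ∈ {-1,1}^N} ‖∑ⱼ εⱼ • xⱼ‖²` over all choices of signs. -/
def radAvg {E : Type*} [NormedAddCommGroup E] [NormedSpace ℝ E] {N : ℕ}
    (x : Fin N → E) : ℝ :=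
  (2 ^ N : ℝ)⁻¹ * ∑ ε : Fin N → Bool, ‖∑ j, (if ε j then (1 : ℝ) else -1) • x j‖ ^ 2

/-- `E` has type `p`. -/
def HasType (E : Type*) [NormedAddCommGroup E] [NormedSpace ℝ E] (p : ℝ) : Prop :=
  ∃ C : ℝ, 0 ≤ C ∧ ∀ (N : ℕ) (x : Fin N → E),
    Real.sqrt (radAvg x) ≤ C * (∑ j, ‖x j‖ ^ p) ^ (1 / p)

/-- `E` has cotype `q`. -/
def HasCotype (E : Type*) [NormedAddCommGroup E] [NormedSpace ℝ E] (q : ℝ) : Prop :=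
  ∃ C : ℝ, 0 ≤ C ∧ ∀ (N : ℕ) (x : Fin N → E),
    (∑ j, ‖x j‖ ^ q) ^ (1 / q) ≤ C * Real.sqrt (radAvg x)

/-- `C` is an R-bound for the set `S` of vectors (scalar test sequences). -/
def IsRBound {𝒳 : Type*} [NormedAddCommGroup 𝒳] [NormedSpace ℝ 𝒳]
    (S : Set 𝒳) (C : ℝ) : Prop :=
  0 ≤ C ∧ ∀ (N : ℕ) (y : Fin N → 𝒳) (l : Fin N → ℝ), (∀ j, y j ∈ S) →
    radAvg (fun j => l j • y j) ≤ C ^ 2 * radAvg l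

/-- The R-bound `𝓡(S) ∈ [0,∞]` of a set of vectors. -/
def Rbound {𝒳 : Type*} [NormedAddCommGroup 𝒳] [NormedSpace ℝ 𝒳] (S : Set 𝒳) : ℝ≥0∞ :=
  sInf {c : ℝ≥0∞ | ∃ r : ℝ, IsRBound S r ∧ c = ENNReal.ofReal r}

/-- `C` is an R-bound for the family `S` of operators. -/
def IsRBoundOp {H E : Type*} [NormedAddCommGroup H] [NormedSpace ℝ H]
    [NormedAddCommGroup E] [NormedSpace ℝ E] (S : Set (H →L[ℝ] E)) (C : ℝ) : Prop :=
  0 ≤ C ∧ ∀ (N : ℕ) (T : Fin N → H →L[ℝ] E) (x : Fin N → H), (∀ j, T j ∈ S) →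
    radAvg (fun j => T j (x j)) ≤ C ^ 2 * radAvg x

/-- The R-bound `𝓡(S) ∈ [0,∞]` of a family of operators. -/
def RboundOp {H E : Type*} [NormedAddCommGroup H] [NormedSpace ℝ H]
    [NormedAddCommGroup E] [NormedSpace ℝ E] (S : Set (H →L[ℝ] E)) : ℝ≥0∞ :=
  sInf {c : ℝ≥0∞ | ∃ r : ℝ, IsRBoundOp S r ∧ c = ENNReal.ofReal r}

/-- The average of `f` over the standard dyadic interval of generation `j` containing `ξ`. -/
def dyAvg {𝒳 : Type*} [NormedAddCommGroup 𝒳] [NormedSpace ℝ 𝒳] (f : ℝ → 𝒳) (j : ℤ)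
    (ξ : ℝ) : 𝒳 :=
  ((2 : ℝ) ^ j) • ∫ t in Set.Ico ((⌊(2 : ℝ) ^ j * ξ⌋ : ℝ) / (2 : ℝ) ^ j)
      (((⌊(2 : ℝ) ^ j * ξ⌋ : ℝ) + 1) / (2 : ℝ) ^ j), f t

/-- The standard dyadic cube of generation `j` containing `ξ` in `ℝⁿ`. -/
def dyCube (n : ℕ) (j : ℤ) (ξ : Fin n → ℝ) : Set (Fin n → ℝ) :=
  {η | ∀ i, ⌊(2 : ℝ) ^ j * η i⌋ = ⌊(2 : ℝ) ^ j * ξ i⌋}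

/-- The average of `f` over the standard dyadic cube of generation `j` containing `ξ`. -/
def cubeAvg {n : ℕ} {𝒳 : Type*} [NormedAddCommGroup 𝒳] [NormedSpace ℝ 𝒳]
    (f : (Fin n → ℝ) → 𝒳) (j : ℤ) (ξ : Fin n → ℝ) : 𝒳 :=
  ((2 : ℝ) ^ (j * (n : ℤ))) • ∫ η in dyCube n j ξ, f η

/-- The Rademacher maximal function w.r.t. the standard dyadic cubes in `ℝⁿ`. -/
def MRcube {n : ℕ} {𝒳 : Type*} [NormedAddCommGroup 𝒳] [NormedSpace ℝ 𝒳]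
    (f : (Fin n → ℝ) → 𝒳) (ξ : Fin n → ℝ) : ℝ≥0∞ :=
  Rbound {y : 𝒳 | ∃ j : ℤ, y = cubeAvg f j ξ}

/-- The Rademacher maximal function w.r.t. the dyadic intervals of `[0,1)`. -/
def MRdyadic01 {𝒳 : Type*} [NormedAddCommGroup 𝒳] [NormedSpace ℝ 𝒳]
    (f : ℝ → 𝒳) (ξ : ℝ) : ℝ≥0∞ :=
  Rbound {y : 𝒳 | ∃ j : ℕ, y = dyAvg f (j : ℤ) ξ}

/-- The operator-valued Rademacher maximal function w.r.t. the standard dyadic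
intervals on `ℝ`. -/
def MRlineOp {H E : Type*} [NormedAddCommGroup H] [NormedSpace ℝ H]
    [NormedAddCommGroup E] [NormedSpace ℝ E] (f : ℝ → (H →L[ℝ] E)) (ξ : ℝ) : ℝ≥0∞ :=
  RboundOp {T : H →L[ℝ] E | ∃ j : ℤ, T = dyAvg f j ξ}

/-- The operator-valued Rademacher maximal function w.r.t. the dyadic intervals
of `[0,1)`. -/
def MRdyadic01Op {H E : Type*} [NormedAddCommGroup H] [NormedSpace ℝ H]
    [NormedAddCommGroup E] [NormedSpace ℝ E] (f : ℝ → (H →L[ℝ] E)) (ξ : ℝ) : ℝ≥0∞ :=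
  RboundOp {T : H →L[ℝ] E | ∃ j : ℕ, T = dyAvg f (j : ℤ) ξ}

/-- The Rademacher maximal function w.r.t. a family of sub-σ-algebras. -/
def MRfilt {𝒳 : Type*} [NormedAddCommGroup 𝒳] [NormedSpace ℝ 𝒳] [CompleteSpace 𝒳]
    {Ω ι : Type*} [m0 : MeasurableSpace Ω] (μ : Measure Ω) (m : ι → MeasurableSpace Ω)
    (f : Ω → 𝒳) (ξ : Ω) : ℝ≥0∞ :=
  Rbound {y : 𝒳 | ∃ j : ι, y = (μ[f| m j]) ξ}

/-- `𝒳` has `RMF_p` with constant `C` w.r.t. the family `m` of sub-σ-algebras on `(Ω, μ)`. -/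
def RMFpWith (𝒳 : Type*) [NormedAddCommGroup 𝒳] [NormedSpace ℝ 𝒳] [CompleteSpace 𝒳]
    (p C : ℝ) {Ω ι : Type*} [m0 : MeasurableSpace Ω] (μ : Measure Ω)
    (m : ι → MeasurableSpace Ω) : Prop :=
  ∀ f : Ω → 𝒳, MemLp f (ENNReal.ofReal p) μ →
    (∫⁻ ξ, MRfilt μ m f ξ ^ p ∂μ) ^ (1 / p) ≤
      ENNReal.ofReal C * eLpNorm f (ENNReal.ofReal p) μ

/-- A measure is divisible if any set of positive measure contains subsets of any
prescribed fraction of its measure. -/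
def Divisible {Ω : Type*} [MeasurableSpace Ω] (μ : Measure Ω) : Prop :=
  ∀ A : Set Ω, MeasurableSet A → 0 < μ A → ∀ c : ℝ, 0 < c → c < 1 →
    ∃ B : Set Ω, MeasurableSet B ∧ B ⊆ A ∧ μ B = ENNReal.ofReal c * μ A

/-- A Haar filtration on `(Ω, μ)`: `part j` is the generating partition of the
`(j+1)`-st σ-algebra of the filtration (so it has `j + 2` members), and each
partition arises from the previous one by splitting the set `splitSet j` into the
two pieces `piece1 j` and `piece2 j` of positive measure; `part 0` itself arises by
splitting `Ω` in two. -/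
structure HaarSystem (Ω : Type*) [m0 : MeasurableSpace Ω] (μ : Measure Ω) where
  part : ℕ → Finset (Set Ω)
  card_part : ∀ j, (part j).card = j + 2
  meas : ∀ j, ∀ A ∈ part j, MeasurableSet A
  disj : ∀ j, ∀ A ∈ part j, ∀ B ∈ part j, A ≠ B → Disjoint A B
  cover : ∀ j, ⋃₀ (↑(part j) : Set (Set Ω)) = Set.univ
  pos : ∀ j, ∀ A ∈ part j, 0 < μ A
  splitSet : ℕ → Set Ω
  piece1 : ℕ → Set Ω
  piece2 : ℕ → Set Ω
  splitSet_mem : ∀ j, splitSet j ∈ part j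
  union_pieces : ∀ j, piece1 j ∪ piece2 j = splitSet j
  disj_pieces : ∀ j, Disjoint (piece1 j) (piece2 j)
  part_succ : ∀ j, part (j + 1) =
    insert (piece1 j) (insert (piece2 j) ((part j).erase (splitSet j)))

/-- The σ-algebras of a Haar filtration. -/
def HaarSystem.salg {Ω : Type*} [m0 : MeasurableSpace Ω] {μ : Measure Ω}
    (S : HaarSystem Ω μ) (j : ℕ) : MeasurableSpace Ω :=
  MeasurableSpace.generateFrom (↑(S.part j) : Set (Set Ω))

/-- A Haar filtration is dyadic if in each splitting the measure of each piece is a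
dyadic fraction of the measure of the split set. -/
def HaarSystem.IsDyadic {Ω : Type*} [m0 : MeasurableSpace Ω] {μ : Measure Ω}
    (S : HaarSystem Ω μ) : Prop :=
  (∀ A ∈ S.part 0, ∃ m k : ℕ, μ A = (m : ℝ≥0∞) / 2 ^ k * μ Set.univ) ∧
  ∀ j, ∃ m k : ℕ, μ (S.piece1 j) = (m : ℝ≥0∞) / 2 ^ k * μ (S.splitSet j)

/-- A Haar filtration is standard if each splitting is into two pieces of equal measure. -/
def HaarSystem.IsStandard {Ω : Type*} [m0 : MeasurableSpace Ω] {μ : Measure Ω}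
    (S : HaarSystem Ω μ) : Prop :=
  (∀ A ∈ S.part 0, μ A = μ Set.univ / 2) ∧
  ∀ j, μ (S.piece1 j) = μ (S.splitSet j) / 2

/-- A filtration of finite sub-σ-algebras, given by finite generating partitions
into sets of positive measure. -/
structure PartitionFiltration (Ω : Type*) [m0 : MeasurableSpace Ω] (μ : Measure Ω) where
  part : ℕ → Finset (Set Ω)
  meas : ∀ j, ∀ A ∈ part j, MeasurableSet A
  disj : ∀ j, ∀ A ∈ part j, ∀ B ∈ part j, A ≠ B → Disjoint A B
  cover : ∀ j, ⋃₀ (↑(part j) : Set (Set Ω)) = Set.univ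
  pos : ∀ j, ∀ A ∈ part j, 0 < μ A
  mono : ∀ j, MeasurableSpace.generateFrom (↑(part j) : Set (Set Ω)) ≤
    MeasurableSpace.generateFrom (↑(part (j + 1)) : Set (Set Ω))

/-- The natural σ-algebra `σ(X_1, …, X_j)` of a process. -/
def natSig {𝒳 Ω : Type*} [NormedAddCommGroup 𝒳] (X : ℕ → Ω → 𝒳) (j : ℕ) :
    MeasurableSpace Ω :=
  ⨆ i ∈ Set.Icc 1 j, MeasurableSpace.comap (X i) (borel 𝒳)

/-- `(X_j)_{j ≥ 1}` is a martingale (w.r.t. its natural filtration). -/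
def IsMart {𝒳 : Type*} [NormedAddCommGroup 𝒳] [NormedSpace ℝ 𝒳] [CompleteSpace 𝒳]
    {Ω : Type*} [m0 : MeasurableSpace Ω] (μ : Measure Ω) (X : ℕ → Ω → 𝒳) : Prop :=
  (∀ j, 1 ≤ j → Integrable (X j) μ) ∧ (∀ j, 1 ≤ j → natSig X j ≤ m0) ∧
  ∀ j k, 1 ≤ j → j ≤ k → (μ[X k| natSig X j]) =ᵐ[μ] X j

/-- `‖X‖_p = sup_{j ≥ 1} (𝔼 ‖X_j‖^p)^{1/p}`. -/
def martNorm {𝒳 : Type*} [NormedAddCommGroup 𝒳] {Ω : Type*} [m0 : MeasurableSpace Ω]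
    (μ : Measure Ω) (X : ℕ → Ω → 𝒳) (p : ℝ≥0∞) : ℝ≥0∞ :=
  ⨆ j, ⨆ (_ : 1 ≤ j), eLpNorm (X j) p μ

/-- The Rademacher maximal function `X_R^* = 𝓡({X_j : j ≥ 1})` of a process. -/
def martR {𝒳 : Type*} [NormedAddCommGroup 𝒳] [NormedSpace ℝ 𝒳] {Ω : Type*}
    (X : ℕ → Ω → 𝒳) (ω : Ω) : ℝ≥0∞ :=
  Rbound {y : 𝒳 | ∃ j, 1 ≤ j ∧ y = X j ω}

/-- Doob's maximal function `X^* = sup_{j ≥ 1} ‖X_j‖` of a process. -/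
def martStar {𝒳 : Type*} [NormedAddCommGroup 𝒳] {Ω : Type*}
    (X : ℕ → Ω → 𝒳) (ω : Ω) : ℝ≥0∞ :=
  ⨆ j, ⨆ (_ : 1 ≤ j), (‖X j ω‖₊ : ℝ≥0∞)

/-- `𝒳` has weak RMF with constant `C`: every `L¹`-bounded martingale `X` in `𝒳`
satisfies `ℙ(X_R^* > λ) ≤ (C/λ) ‖X‖₁`. -/
def WeakRMFConst (𝒳 : Type*) [NormedAddCommGroup 𝒳] [NormedSpace ℝ 𝒳]
    [CompleteSpace 𝒳] (C : ℝ) : Prop :=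
  ∀ (Ω : Type u) (m0 : MeasurableSpace Ω) (μ : Measure Ω), IsProbabilityMeasure μ →
    ∀ X : ℕ → Ω → 𝒳, IsMart μ X → martNorm μ X 1 < ⊤ →
      ∀ lam : ℝ, 0 < lam →
        μ {ω | ENNReal.ofReal lam < martR X ω} ≤
          ENNReal.ofReal (C / lam) * martNorm μ X 1

/-- A standard Haar martingale: a martingale whose natural filtration is a standard
Haar filtration. -/
def IsStdHaarMart {𝒳 : Type*} [NormedAddCommGroup 𝒳] [NormedSpace ℝ 𝒳] [CompleteSpace 𝒳]
    {Ω : Type*} [m0 : MeasurableSpace Ω] (μ : Measure Ω) (X : ℕ → Ω → 𝒳) : Prop :=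
  IsMart μ X ∧ ∃ S : HaarSystem Ω μ, S.IsStandard ∧
    ∀ j, 1 ≤ j → natSig X j = S.salg (j - 1)

/-- A finite martingale `(X_j)_{j=1}^N`. -/
def IsFinMart {𝒳 : Type*} [NormedAddCommGroup 𝒳] [NormedSpace ℝ 𝒳] [CompleteSpace 𝒳]
    {Ω : Type*} [m0 : MeasurableSpace Ω] (μ : Measure Ω) (X : ℕ → Ω → 𝒳) (N : ℕ) : Prop :=
  (∀ j, 1 ≤ j → j ≤ N → Integrable (X j) μ) ∧
  (∀ j, 1 ≤ j → j ≤ N → natSig X j ≤ m0) ∧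
  ∀ j k, 1 ≤ j → j ≤ k → k ≤ N → (μ[X k| natSig X j]) =ᵐ[μ] X j

/-- A simple martingale `(X_j)_{j=1}^N`: a finite martingale all of whose random
variables take finitely many values. -/
def IsSimpleMart {𝒳 : Type*} [NormedAddCommGroup 𝒳] [NormedSpace ℝ 𝒳] [CompleteSpace 𝒳]
    {Ω : Type*} [m0 : MeasurableSpace Ω] (μ : Measure Ω) (X : ℕ → Ω → 𝒳) (N : ℕ) : Prop :=
  IsFinMart μ X N ∧ ∀ j, 1 ≤ j → j ≤ N → (Set.range (X j)).Finite

/-- The (finite) set `{X_1(ω), …, X_k(ω)}`. -/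
def martSet {𝒳 Ω : Type*} [DecidableEq 𝒳] (X : ℕ → Ω → 𝒳) (k : ℕ) (ω : Ω) : Finset 𝒳 :=
  (Finset.Icc 1 k).image fun i => X i ω

lemma sum_sgn_mul (N : ℕ) (j k : Fin N) :
    ∑ ε : Fin N → Bool, (if ε j then (1:ℝ) else -1) * (if ε k then (1:ℝ) else -1)
      = if j = k then (2:ℝ)^N else 0 := by
  rcases eq_or_ne j k with h | h
  · subst h
    rw [if_pos rfl]
    have h1 : ∀ ε : Fin N → Bool,
        (if ε j then (1:ℝ) else -1) * (if ε j then (1:ℝ) else -1) = 1 := by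
      intro ε; cases ε j <;> norm_num
    simp only [h1, Finset.sum_const, nsmul_eq_mul, mul_one, Finset.card_univ]
    simp [Fintype.card_fun]
  · rw [if_neg h]
    have hinv : Function.Involutive (fun ε : Fin N → Bool => Function.update ε j (!(ε j))) := by
      intro ε
      funext i
      rcases eq_or_ne i j with rfl | hi
      · simp [Function.update]
      · simp [Function.update, hi]
    have he := Fintype.sum_bijective _ hinv.bijective
      (fun ε : Fin N → Bool => (if ε j then (1:ℝ) else -1) * (if ε k then (1:ℝ) else -1))
      (fun ε : Fin N → Bool => -((if ε j then (1:ℝ) else -1) * (if ε k then (1:ℝ) else -1)))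
      (by
        intro ε
        simp only [Function.update, h.symm]
        cases hb : ε j <;> cases ε k <;> simp [hb] <;> norm_num)
    rw [Finset.sum_neg_distrib] at he
    linarith

lemma orth {E : Type*} [NormedAddCommGroup E] [NormedSpace ℝ E] (N : ℕ)
    (f : Fin N → (E →L[ℝ] ℝ)) (x : Fin N → E) :
    ∑ ε : Fin N → Bool,
        (∑ j, (if ε j then (1:ℝ) else -1) • f j) (∑ k, (if ε k then (1:ℝ) else -1) • x k)
      = (2:ℝ)^N * ∑ j, (f j) (x j) := by
  have step : ∀ ε : Fin N → Bool,
      (∑ j, (if ε j then (1:ℝ) else -1) • f j) (∑ k, (if ε k then (1:ℝ) else -1) • x k)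
      = ∑ j, ∑ k, ((if ε j then (1:ℝ) else -1) * (if ε k then (1:ℝ) else -1)) * (f j) (x k) := by
    intro ε
    rw [ContinuousLinearMap.sum_apply]
    refine Finset.sum_congr rfl fun j _ => ?_
    simp only [ContinuousLinearMap.smul_apply, map_sum, _root_.map_smul, smul_eq_mul, Finset.mul_sum]
    exact Finset.sum_congr rfl fun k _ => by ring
  rw [Finset.sum_congr rfl (fun ε _ => step ε), Finset.sum_comm]
  have : ∀ j : Fin N, ∑ ε : Fin N → Bool, ∑ k,
      ((if ε j then (1:ℝ) else -1) * (if ε k then (1:ℝ) else -1)) * (f j) (x k)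
      = (2:ℝ)^N * (f j) (x j) := by
    intro j
    rw [Finset.sum_comm]
    have : ∀ k : Fin N, ∑ ε : Fin N → Bool,
        ((if ε j then (1:ℝ) else -1) * (if ε k then (1:ℝ) else -1)) * (f j) (x k)
        = (if j = k then (2:ℝ)^N else 0) * (f j) (x k) := by
      intro k
      rw [← Finset.sum_mul, sum_sgn_mul]
    rw [Finset.sum_congr rfl (fun k _ => this k)]
    simp [Finset.sum_ite_eq, ite_mul]
  rw [Finset.sum_congr rfl (fun j _ => this j), ← Finset.mul_sum]


lemma sqrt_mul_aux (c A B : ℝ) (hc : 0 ≤ c) (hA : 0 ≤ A) (hB : 0 ≤ B) :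
    c * (Real.sqrt A * Real.sqrt B) = Real.sqrt (c * A) * Real.sqrt (c * B) := by
  rw [Real.sqrt_mul hc, Real.sqrt_mul hc]
  nth_rewrite 1 [← Real.mul_self_sqrt hc]
  ring

lemma radAvg_nonneg {E : Type*} [NormedAddCommGroup E] [NormedSpace ℝ E] {N : ℕ}
    (x : Fin N → E) : 0 ≤ radAvg x := by
  unfold radAvg
  positivity


/-- If the dual of a Banach space `E` has non-trivial type, then `E` has finite cotype. -/
theorem statement0 {E : Type*} [NormedAddCommGroup E] [NormedSpace ℝ E] [CompleteSpace E]
    (h : ∃ p : ℝ, 1 < p ∧ p ≤ 2 ∧ HasType (StrongDual ℝ E) p) :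
    ∃ q : ℝ, 2 ≤ q ∧ HasCotype E q := by
  obtain ⟨p, hp1, hp2, C, hC0, hC⟩ := h
  have hp0 : (0:ℝ) < p := by linarith
  have hpm : (0:ℝ) < p - 1 := by linarith
  set q := p / (p - 1) with hqdef
  have hq0 : (0:ℝ) < q := div_pos hp0 hpm
  have hqp : q * (p - 1) = p := by rw [hqdef]; field_simp
  have hq1p : (q - 1) * p = q := by nlinarith [hqp]
  have hq2 : 2 ≤ q := by rw [hqdef, le_div_iff₀ hpm]; linarith
  have h1q : 1/q + 1/p = 1 := by
    rw [hqdef]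
    field_simp
    ring
  refine ⟨q, hq2, C, hC0, ?_⟩
  intro N x
  choose g hg1 hg2 using fun j => exists_dual_vector'' ℝ (x j)
  set a : Fin N → ℝ := fun j => ‖x j‖ ^ (q - 1) with ha
  have ha0 : ∀ j, 0 ≤ a j := fun j => Real.rpow_nonneg (norm_nonneg _) _
  set f : Fin N → StrongDual ℝ E := fun j => a j • g j with hf
  set S := ∑ j, ‖x j‖ ^ q with hS
  have hS0 : 0 ≤ S := Finset.sum_nonneg fun j _ => Real.rpow_nonneg (norm_nonneg _) _
  have hRx : 0 ≤ Real.sqrt (radAvg x) := Real.sqrt_nonneg _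
  -- Step 1: S = ∑ f j (x j)
  have hSsum : S = ∑ j, (f j) (x j) := by
    refine Finset.sum_congr rfl fun j _ => ?_
    have h1 : (f j) (x j) = a j * ‖x j‖ := by
      simp [hf, hg2 j]
    rw [h1]
    have h2 : ‖x j‖ ^ q = ‖x j‖ ^ (q - 1) * ‖x j‖ ^ (1:ℝ) := by
      rw [← Real.rpow_add_of_nonneg (norm_nonneg _) (by linarith) zero_le_one]
      norm_num
    rw [h2, Real.rpow_one]
  -- Step 2: S ≤ sqrt(radAvg f) * sqrt(radAvg x)
  have hpow : (0:ℝ) < (2:ℝ)^N := by positivity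
  have hinv0 : (0:ℝ) ≤ ((2:ℝ)^N)⁻¹ := by positivity
  have key1 : S ≤ Real.sqrt (radAvg f) * Real.sqrt (radAvg x) := by
    have horth := orth N f x
    have h1 : S = ((2:ℝ)^N)⁻¹ * ∑ ε : Fin N → Bool,
        (∑ j, (if ε j then (1:ℝ) else -1) • f j) (∑ k, (if ε k then (1:ℝ) else -1) • x k) := by
      rw [horth, hSsum]
      field_simp
    rw [h1]
    have h2 : ∑ ε : Fin N → Bool,
        (∑ j, (if ε j then (1:ℝ) else -1) • f j) (∑ k, (if ε k then (1:ℝ) else -1) • x k)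
        ≤ ∑ ε : Fin N → Bool,
          ‖∑ j, (if ε j then (1:ℝ) else -1) • f j‖ * ‖∑ k, (if ε k then (1:ℝ) else -1) • x k‖ := by
      refine Finset.sum_le_sum fun ε _ => ?_
      calc (∑ j, (if ε j then (1:ℝ) else -1) • f j) (∑ k, (if ε k then (1:ℝ) else -1) • x k)
          ≤ ‖(∑ j, (if ε j then (1:ℝ) else -1) • f j) (∑ k, (if ε k then (1:ℝ) else -1) • x k)‖ :=
            le_trans (le_abs_self _) (le_of_eq (Real.norm_eq_abs _).symm)
        _ ≤ _ := ContinuousLinearMap.le_opNorm _ _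
    have cs := Real.sum_mul_le_sqrt_mul_sqrt Finset.univ
      (fun ε : Fin N → Bool => ‖∑ j, (if ε j then (1:ℝ) else -1) • f j‖)
      (fun ε : Fin N → Bool => ‖∑ k, (if ε k then (1:ℝ) else -1) • x k‖)
    have hsq : Real.sqrt ((2:ℝ)^N)⁻¹ * Real.sqrt ((2:ℝ)^N)⁻¹ = ((2:ℝ)^N)⁻¹ :=
      Real.mul_self_sqrt hinv0
    calc ((2:ℝ)^N)⁻¹ * ∑ ε : Fin N → Bool,
        (∑ j, (if ε j then (1:ℝ) else -1) • f j) (∑ k, (if ε k then (1:ℝ) else -1) • x k)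
        ≤ ((2:ℝ)^N)⁻¹ * ∑ ε : Fin N → Bool,
          ‖∑ j, (if ε j then (1:ℝ) else -1) • f j‖ * ‖∑ k, (if ε k then (1:ℝ) else -1) • x k‖ :=
          mul_le_mul_of_nonneg_left h2 hinv0
      _ ≤ ((2:ℝ)^N)⁻¹ *
          (Real.sqrt (∑ ε : Fin N → Bool, ‖∑ j, (if ε j then (1:ℝ) else -1) • f j‖ ^ 2) *
           Real.sqrt (∑ ε : Fin N → Bool, ‖∑ k, (if ε k then (1:ℝ) else -1) • x k‖ ^ 2)) :=
          mul_le_mul_of_nonneg_left cs hinv0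
      _ = Real.sqrt (radAvg f) * Real.sqrt (radAvg x) := by
          unfold radAvg
          exact sqrt_mul_aux _ _ _ hinv0 (Finset.sum_nonneg fun _ _ => sq_nonneg _)
            (Finset.sum_nonneg fun _ _ => sq_nonneg _)
  -- Step 3: sqrt(radAvg f) ≤ C * S^(1/p)
  have key2 : Real.sqrt (radAvg f) ≤ C * S ^ (1/p) := by
    refine le_trans (hC N f) (mul_le_mul_of_nonneg_left ?_ hC0)
    refine Real.rpow_le_rpow (Finset.sum_nonneg fun j _ => Real.rpow_nonneg (norm_nonneg _) _)
      (Finset.sum_le_sum fun j _ => ?_) (by positivity)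
    have hfj : ‖f j‖ ≤ a j := by
      rw [hf]
      calc ‖a j • g j‖ ≤ |a j| * ‖g j‖ := by
            simpa using norm_smul_le (a j) (g j)
        _ ≤ a j * 1 := by
            rw [abs_of_nonneg (ha0 j)]
            exact mul_le_mul_of_nonneg_left (hg1 j) (ha0 j)
        _ = a j := mul_one _
    calc ‖f j‖ ^ p ≤ a j ^ p := Real.rpow_le_rpow (norm_nonneg _) hfj hp0.le
      _ = ‖x j‖ ^ q := by
          rw [ha]
          rw [← Real.rpow_mul (norm_nonneg _), hq1p]
  -- conclude
  have key : S ≤ (C * S ^ (1/p)) * Real.sqrt (radAvg x) :=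
    le_trans key1 (mul_le_mul_of_nonneg_right key2 hRx)
  rcases eq_or_lt_of_le hS0 with h0 | hpos
  · rw [← h0, Real.zero_rpow (by positivity : 1/q ≠ 0)]
    exact mul_nonneg hC0 hRx
  · have hSp : 0 < S ^ (1/p) := Real.rpow_pos_of_pos hpos _
    refine le_of_mul_le_mul_right ?_ hSp
    calc S ^ (1/q) * S ^ (1/p) = S := by
          rw [← Real.rpow_add hpos, h1q, Real.rpow_one]
      _ ≤ (C * S ^ (1/p)) * Real.sqrt (radAvg x) := key
      _ = (C * Real.sqrt (radAvg x)) * S ^ (1/p) := by ring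

end RMF
end
end

section
/- Let 𝒳 be a Banach space, N ≥ 1, and T_1,…,T_N ∈ 𝒳 with ‖T_j‖ ≤ 1 for all j. Define S_1 = T_1 and S_j = 2T_j − T_{j−1} for 2 ≤ j ≤ N, and define f : [0,1) → 𝒳 by f(ξ) = S_1 for ξ ∈ [0, 2^{1−N}) and f(ξ) = S_j for ξ ∈ [2^{j−1−N}, 2^{j−N}), 2 ≤ j ≤ N. Then ‖f(ξ)‖ ≤ 3 for every ξ ∈ [0,1), and for every j = 1,…,N the average of f over the interval I_j = [0, 2^{j−N}), namely 2^{N−j} ∫_{I_j} f(ξ) dξ (a Bochner integral with respect to Lebesgue measure), equals T_j. -/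
open MeasureTheory Finset Set
open scoped ENNReal NNReal

noncomputable section

namespace RMF

open scoped Classical

universe u

/-- The construction of an `L^∞` function on `[0,1)` whose dyadic averages over the
intervals `[0, 2^{j-N})` are the prescribed operators `T_j`. -/
theorem statement3 {𝒳 : Type*} [NormedAddCommGroup 𝒳] [NormedSpace ℝ 𝒳] [CompleteSpace 𝒳]
    (N : ℕ) (hN : 1 ≤ N) (T S : ℕ → 𝒳) (hT : ∀ j, 1 ≤ j → j ≤ N → ‖T j‖ ≤ 1)
    (hS1 : S 1 = T 1) (hS : ∀ j, 2 ≤ j → j ≤ N → S j = (2 : ℝ) • T j - T (j - 1))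
    (f : ℝ → 𝒳) (hf1 : ∀ ξ ∈ Set.Ico (0 : ℝ) ((2 : ℝ) ^ ((1 : ℤ) - N)), f ξ = S 1)
    (hfj : ∀ j : ℕ, 2 ≤ j → j ≤ N →
      ∀ ξ ∈ Set.Ico ((2 : ℝ) ^ ((j : ℤ) - 1 - N)) ((2 : ℝ) ^ ((j : ℤ) - N)), f ξ = S j) :
    (∀ ξ ∈ Set.Ico (0 : ℝ) 1, ‖f ξ‖ ≤ 3) ∧
    ∀ j : ℕ, 1 ≤ j → j ≤ N →
      ((2 : ℝ) ^ ((N : ℤ) - j)) • ∫ ξ in Set.Ico (0 : ℝ) ((2 : ℝ) ^ ((j : ℤ) - N)), f ξ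
        = T j := by
  have h2ne : (2 : ℝ) ≠ 0 := two_ne_zero
  -- norm bound on S
  have hSnorm : ∀ j, 1 ≤ j → j ≤ N → ‖S j‖ ≤ 3 := by
    intro j h1 hjN
    rcases eq_or_lt_of_le h1 with h | h
    · rw [← h, hS1]
      linarith [hT 1 le_rfl hN]
    · have hj2 : 2 ≤ j := h
      rw [hS j hj2 hjN]
      have hTj : ‖T j‖ ≤ 1 := hT j (le_trans one_le_two hj2) hjN
      have hTj' : ‖T (j - 1)‖ ≤ 1 := by
        refine hT (j - 1) ?_ ?_ <;> omega
      calc ‖(2 : ℝ) • T j - T (j - 1)‖ ≤ ‖(2 : ℝ) • T j‖ + ‖T (j - 1)‖ :=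
            norm_sub_le _ _
        _ ≤ 2 * 1 + 1 := by
            rw [norm_smul, Real.norm_two]; gcongr
        _ = 3 := by norm_num
  -- main induction: integrability and integral value
  have key : ∀ j : ℕ, 1 ≤ j → j ≤ N →
      IntegrableOn f (Set.Ico (0 : ℝ) ((2 : ℝ) ^ ((j : ℤ) - N))) volume ∧
      (∫ ξ in Set.Ico (0 : ℝ) ((2 : ℝ) ^ ((j : ℤ) - N)), f ξ)
        = ((2 : ℝ) ^ ((j : ℤ) - N)) • T j := by
    intro j hj
    induction j, hj using Nat.le_induction with
    | base =>
      intro _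
      have hcongr : ∀ ξ ∈ Set.Ico (0 : ℝ) ((2 : ℝ) ^ ((1 : ℤ) - N)), f ξ = S 1 := hf1
      have hInt : IntegrableOn f (Set.Ico (0 : ℝ) ((2 : ℝ) ^ ((1 : ℤ) - N))) volume := by
        rw [integrableOn_congr_fun hcongr measurableSet_Ico]
        exact integrableOn_const measure_Ico_lt_top.ne
      refine ⟨by exact_mod_cast hInt, ?_⟩
      rw [show (((1 : ℕ) : ℤ) - (N : ℤ)) = (1 : ℤ) - N by push_cast; ring]
      rw [setIntegral_congr_fun measurableSet_Ico hcongr, setIntegral_const,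
        Real.volume_real_Ico_of_le (by positivity), hS1, sub_zero]
    | succ j hj ih =>
      intro hjN
      obtain ⟨ihI, ihE⟩ := ih (by omega)
      set a : ℝ := (2 : ℝ) ^ ((j : ℤ) - N) with ha
      have hcast : (((j + 1 : ℕ) : ℤ) - (N : ℤ)) = (j : ℤ) + 1 - N := by push_cast; ring
      have hb : (2 : ℝ) ^ (((j + 1 : ℕ) : ℤ) - (N : ℤ)) = 2 * a := by
        rw [hcast, show (j:ℤ)+1-(N:ℤ) = ((j:ℤ)-N)+1 by ring, zpow_add_one₀ h2ne, ha]; ring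
      have ha0 : 0 < a := by positivity
      have hab : a ≤ 2 * a := by linarith
      have hcongr2 : ∀ ξ ∈ Set.Ico a (2 * a), f ξ = S (j + 1) := by
        intro ξ hξ
        refine hfj (j + 1) (by omega) hjN ξ ?_
        have : (((j + 1 : ℕ) : ℤ) - 1 - (N : ℤ)) = (j : ℤ) - N := by push_cast; ring
        rw [this, hcast]
        constructor
        · exact hξ.1
        · have : (2 : ℝ) ^ ((j : ℤ) + 1 - N) = 2 * a := by
            rw [show (j:ℤ)+1-(N:ℤ) = ((j:ℤ)-N)+1 by ring, zpow_add_one₀ h2ne, ha]; ring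
          rw [this]; exact hξ.2
      have hInt2 : IntegrableOn f (Set.Ico a (2 * a)) volume := by
        rw [integrableOn_congr_fun hcongr2 measurableSet_Ico]
        exact integrableOn_const measure_Ico_lt_top.ne
      have hunion : Set.Ico (0 : ℝ) a ∪ Set.Ico a (2 * a) = Set.Ico (0 : ℝ) (2 * a) :=
        Set.Ico_union_Ico_eq_Ico (le_of_lt ha0) hab
      have hdisj : Disjoint (Set.Ico (0 : ℝ) a) (Set.Ico a (2 * a)) :=
        Set.Ico_disjoint_Ico_same
      constructor
      · rw [hb, ← hunion]
        exact ihI.union hInt2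
      · rw [hb, ← hunion,
          setIntegral_union hdisj measurableSet_Ico ihI hInt2, ihE,
          setIntegral_congr_fun measurableSet_Ico hcongr2, setIntegral_const,
          Real.volume_real_Ico_of_le hab]
        have : (2 * a - a) = a := by ring
        rw [this, hS (j + 1) (by omega) hjN]
        show a • T j + a • ((2 : ℝ) • T (j + 1) - T (j + 1 - 1)) = (2 * a) • T (j + 1)
        have : j + 1 - 1 = j := rfl
        rw [this, smul_sub, smul_smul]
        rw [show (2 * a) • T (j + 1) = (a * 2) • T (j + 1) by ring_nf]
        abel
  constructor
  · -- pointwise bound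
    intro ξ hξ
    obtain ⟨hξ0, hξ1⟩ := hξ
    by_cases hsmall : ξ < (2 : ℝ) ^ ((1 : ℤ) - N)
    · rw [hf1 ξ ⟨hξ0, hsmall⟩, hS1]
      linarith [hT 1 le_rfl hN]
    · push_neg at hsmall
      have hξpos : 0 < ξ := lt_of_lt_of_le (by positivity) hsmall
      set k : ℤ := Int.log 2 ξ with hk
      have hk1 : (2 : ℝ) ^ k ≤ ξ := Int.zpow_log_le_self one_lt_two hξpos
      have hk2 : ξ < (2 : ℝ) ^ (k + 1) := Int.lt_zpow_succ_log_self one_lt_two ξ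
      have hklb : (1 : ℤ) - N ≤ k := by
        by_contra h
        push_neg at h
        have : k + 1 ≤ (1 : ℤ) - N := by omega
        have : (2 : ℝ) ^ (k + 1) ≤ (2 : ℝ) ^ ((1 : ℤ) - N) :=
          zpow_le_zpow_right₀ one_le_two this
        linarith
      have hkub : k ≤ -1 := by
        by_contra h
        push_neg at h
        have h0 : (0 : ℤ) ≤ k := by omega
        have : (1 : ℝ) ≤ (2 : ℝ) ^ k := one_le_zpow₀ one_le_two h0
        linarith
      set j : ℕ := (k + N + 1).toNat with hj
      have hjcast : (j : ℤ) = k + N + 1 := Int.toNat_of_nonneg (by omega)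
      have hj2 : 2 ≤ j := by omega
      have hjN : j ≤ N := by omega
      have hfx : f ξ = S j := by
        refine hfj j hj2 hjN ξ ?_
        have e1 : ((j : ℤ) - 1 - N) = k := by omega
        have e2 : ((j : ℤ) - N) = k + 1 := by omega
        rw [e1, e2]
        exact ⟨hk1, hk2⟩
      rw [hfx]
      exact hSnorm j (by omega) hjN
  · intro j hj1 hjN
    rw [(key j hj1 hjN).2, smul_smul, ← zpow_add₀ h2ne]
    rw [show ((N : ℤ) - j + ((j : ℤ) - N)) = 0 by ring]
    simp

end RMF
end
end
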